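/- Let c ∈ ℂ and R = ℂ[t, t^{-1}, u | u² = t⁴ − 2ct² + 1]. Let (P_{−4,k})_{k ≥ −4} and (P_{−2,k})_{k ≥ −4} be the sequences of complex numbers each satisfying the recursion (6+2k)P_k = 4kc·P_{k−2} − 2(k−3)·P_{k−4} for k ≥ 0, with initial values P_{−4,−4} = 1, P_{−4,−3} = P_{−4,−2} = P_{−4,−1} = 0 and P_{−2,−2} = 1, P_{−2,−4} = P_{−2,−3} = P_{−2,−1} = 0 respectively. Then for every even integer k ≥ 0, in Ω¹_R/dR one has (class of t^k u dt) = P_{−4,k}·ω_{−4} + P_{−2,k}·ω_{−2}. -/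

import Mathlib

noncomputable section
open Polynomial LaurentPolynomial

/-- The ring `R = ℂ[t,t⁻¹][u]/(u² − (t⁴ − 2ct² + 1))`, realized by adjoining a root `u`
of `X² − (t⁴ − 2ct² + 1)` to the ring of Laurent polynomials `ℂ[t,t⁻¹]`. -/
abbrev DJKM (c : ℂ) : Type :=
  AdjoinRoot ((X : Polynomial (LaurentPolynomial ℂ)) ^ 2 -
    Polynomial.C (T 4 - 2 * LaurentPolynomial.C c * T 2 + 1))

/-- The element `t^i` of `R`, for `i : ℤ`. -/
def tp (c : ℂ) (i : ℤ) : DJKM c := AdjoinRoot.of _ (T i)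

/-- The element `u` of `R`. -/
def uu (c : ℂ) : DJKM c := AdjoinRoot.root _

/-- The subspace `dR ⊆ Ω¹_R` of exact differentials. -/
def dR (c : ℂ) : Submodule ℂ (KaehlerDifferential ℂ (DJKM c)) :=
  LinearMap.range (KaehlerDifferential.D ℂ (DJKM c)).toLinearMap

/-- The class of `f·dg` in `Ω¹_R/dR`. -/
def cls (c : ℂ) (f g : DJKM c) : KaehlerDifferential ℂ (DJKM c) ⧸ dR c :=
  Submodule.Quotient.mk (f • KaehlerDifferential.D ℂ (DJKM c) g)

/-- `ω_k` : the class of `t^k·u·dt` in `Ω¹_R/dR`. -/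
def w (c : ℂ) (k : ℤ) : KaehlerDifferential ℂ (DJKM c) ⧸ dR c :=
  cls c (tp c k * uu c) (tp c 1)

/-- `ω₀` : the class of `t⁻¹·dt` in `Ω¹_R/dR`. -/
def w0 (c : ℂ) : KaehlerDifferential ℂ (DJKM c) ⧸ dR c :=
  cls c (tp c (-1)) (tp c 1)

/-! The exact differential `d(t^m u³)` expands, via `u² = t⁴ - 2ct² + 1` and
`u du = (2t³ - 2ct) dt`, to `((m+6) t^{m+3} - (2m+6)c t^{m+1} + m t^{m-1}) u dt`. Hence in `Ω¹_R/dR`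
the classes `ω_k` satisfy `(k+3) ω_k = 2kc ω_{k-2} - (k-3) ω_{k-4}`, the halved recurrence of the
`P`'s. For `k ≥ 0` the leading coefficient `k+3` is nonzero, so along even indices both sides of
the claim are solutions of one recurrence with the same values at `-4` and `-2`. -/

namespace Derivation

variable {R A M : Type*} [CommSemiring R] [CommRing A] [Algebra R A] [AddCommGroup M]
  [Module A M] [Module R M]

theorem leibniz_zpow_of_map_add (D : Derivation R A M) {e : ℤ → A} (he₀ : e 0 = 1)
    (he : ∀ i j, e (i + j) = e i * e j) (n : ℤ) : D (e n) = n • e (n - 1) • D (e 1) := by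
  induction n using Int.induction_on with
  | zero => simp [he₀]
  | succ n ih =>
    have h : e 1 * e (n - 1) = e n := by rw [← he, add_sub_cancel]
    rw [he, D.leibniz, ih, smul_comm (e 1), smul_smul, h, add_sub_cancel_right]
    module
  | pred n ih =>
    have hinv : e (-1) * e 1 = 1 := by rw [← he, neg_add_cancel, he₀]
    have hsplit := D.leibniz (e (-n - 1)) (e 1)
    rw [← he, sub_add_cancel, ih] at hsplit
    calc D (e (-n - 1)) = e (-1) • e 1 • D (e (-n - 1)) := by rw [smul_smul, hinv, one_smul]
      _ = e (-1) • (-(n : ℤ) • e (-n - 1) • D (e 1) - e (-n - 1) • D (e 1)) := by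
        rw [hsplit, add_sub_cancel_left]
      _ = _ := by
        rw [smul_sub, smul_comm _ (-(n : ℤ)), smul_smul, ← he,
          show -1 + (-(n : ℤ) - 1) = -n - 1 - 1 by ring]
        module

end Derivation

section Recurrence

variable {V : Type*} [AddCommGroup V] [Module ℂ V] {c : ℂ}

def SatisfiesRecurrence (c : ℂ) (W : ℤ → V) : Prop :=
  ∀ k : ℤ, 0 ≤ k → ((k : ℂ) + 3) • W k = (2 * k * c) • W (k - 2) - ((k : ℂ) - 3) • W (k - 4)

lemma satisfiesRecurrence_of_two_mul {P : ℤ → ℂ} (hP : ∀ k : ℤ, 0 ≤ k →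
      ((6 : ℂ) + 2 * (k : ℂ)) * P k = 4 * (k : ℂ) * c * P (k - 2) - 2 * ((k : ℂ) - 3) * P (k - 4)) :
    SatisfiesRecurrence c P := fun k hk => by
  simp only [smul_eq_mul]
  linear_combination (1 / 2 : ℂ) * hP k hk

lemma SatisfiesRecurrence.smul_add_smul {p q : ℤ → ℂ} (hp : SatisfiesRecurrence c p)
    (hq : SatisfiesRecurrence c q) (v v' : V) :
    SatisfiesRecurrence c (fun k => p k • v + q k • v') := fun k hk => by
  linear_combination (norm := module) hp k hk • v + hq k hk • v'

lemma SatisfiesRecurrence.eq_of_eq {W W' : ℤ → V} (hW : SatisfiesRecurrence c W)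
    (hW' : SatisfiesRecurrence c W') (h₄ : W (-4) = W' (-4)) (h₂ : W (-2) = W' (-2)) (n : ℕ) :
    W (2 * n - 4) = W' (2 * n - 4) := by
  suffices ∀ n : ℕ, W (2 * n - 4) = W' (2 * n - 4) ∧ W (2 * n - 2) = W' (2 * n - 2) from
    (this n).1
  intro n
  induction n with
  | zero => simpa using ⟨h₄, h₂⟩
  | succ n ih =>
    have hk : (0 : ℤ) ≤ 2 * n := by positivity
    have hne : ((2 * n : ℤ) : ℂ) + 3 ≠ 0 := by exact_mod_cast (by omega : (2 * n : ℤ) + 3 ≠ 0)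
    refine ⟨by convert ih.2 using 2 <;> push_cast <;> ring, ?_⟩
    rw [show 2 * ((n + 1 : ℕ) : ℤ) - 2 = 2 * n by push_cast; ring]
    apply smul_right_injective V hne
    simp only [hW _ hk, hW' _ hk, ih.1, ih.2]

end Recurrence

section DJKM

variable (c : ℂ)

local notation "D" => KaehlerDifferential.D ℂ (DJKM c)

lemma tp_add (i j : ℤ) : tp c (i + j) = tp c i * tp c j := by
  simp only [tp, T_add, map_mul]

lemma tp_zero : tp c 0 = 1 := by
  simp only [tp, T_zero, map_one]

lemma D_tp (i : ℤ) : D (tp c i) = i • tp c (i - 1) • D (tp c 1) :=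
  (D).leibniz_zpow_of_map_add (tp_zero c) (tp_add c) i

lemma uu_sq : uu c ^ 2 = tp c 4 - (2 * c) • tp c 2 + 1 := by
  have h := AdjoinRoot.eval₂_root ((X : Polynomial (LaurentPolynomial ℂ)) ^ 2 -
    Polynomial.C (T 4 - 2 * LaurentPolynomial.C c * T 2 + 1))
  rw [eval₂_sub, eval₂_X_pow, Polynomial.eval₂_C, sub_eq_zero] at h
  rw [uu, h, tp, tp, Algebra.smul_def]
  simp only [map_add, map_sub, map_mul, map_one]
  rfl

lemma uu_smul_D_uu : uu c • D (uu c) = (2 * tp c 3 - (2 * c) • tp c 1) • D (tp c 1) := by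
  have h := (D).leibniz_pow (uu c) 2
  rw [uu_sq] at h
  simp only [map_add, map_sub, Derivation.map_smul, Derivation.map_one_eq_zero] at h
  rw [D_tp c 4, D_tp c 2] at h
  norm_num at h
  rw [sub_smul, smul_assoc, mul_smul, ofNat_smul_eq_nsmul (R := DJKM c)]
  generalize uu c • D (uu c) = x, tp c 3 • D (tp c 1) = a, tp c 1 • D (tp c 1) = b at h ⊢
  linear_combination (norm := module) (-(1 / 2 : ℂ)) • h

lemma D_tp_mul_uu_pow_three (m : ℤ) : D (tp c m * uu c ^ 3) =
    ((((m : ℂ) + 6) • tp c (m + 3) - ((2 * m + 6) * c) • tp c (m + 1) + (m : ℂ) • tp c (m - 1))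
      * uu c) • D (tp c 1) := by
  have hu : uu c ^ 2 • D (uu c) = uu c • (2 * tp c 3 - (2 * c) • tp c 1) • D (tp c 1) := by
    rw [sq (uu c), mul_smul, uu_smul_D_uu]
  rw [(D).leibniz, (D).leibniz_pow, D_tp, show 3 - 1 = 2 from rfl, hu]
  match_scalars
  have hsq := uu_sq c
  have e3 : tp c (m + 3) = tp c 4 * tp c (m - 1) := by rw [← tp_add]; ring_nf
  have e4 : tp c (m + 1) = tp c 2 * tp c (m - 1) := by rw [← tp_add]; ring_nf
  simp only [Algebra.smul_def, map_add, map_mul, map_intCast, map_ofNat] at hsq ⊢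
  linear_combination uu c * m * tp c (m - 1) * hsq - uu c * m * e3
    + 2 * uu c * algebraMap ℂ _ c * m * e4 - 6 * uu c * tp_add c m 3
    + 6 * uu c * algebraMap ℂ _ c * tp_add c m 1

lemma mk_D_eq_zero (f : DJKM c) : Submodule.Quotient.mk (p := dR c) (D f) = 0 :=
  (Submodule.Quotient.mk_eq_zero _).2 (LinearMap.mem_range_self _ f)

lemma w_recurrence (k : ℤ) :
    ((k : ℂ) + 3) • w c k = (2 * k * c) • w c (k - 2) - ((k : ℂ) - 3) • w c (k - 4) := by
  have h := congrArg (Submodule.Quotient.mk (p := dR c)) (D_tp_mul_uu_pow_three c (k - 3))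
  have hw (j : ℤ) : Submodule.Quotient.mk ((tp c j * uu c) • D (tp c 1)) = w c j := rfl
  simp only [mk_D_eq_zero, add_mul, sub_mul, smul_mul_assoc, add_smul, sub_smul, smul_assoc,
    Submodule.Quotient.mk_add, Submodule.Quotient.mk_sub, Submodule.Quotient.mk_smul, hw] at h
  rw [sub_add_cancel, show k - 3 + 1 = k - 2 by ring, show k - 3 - 1 = k - 4 by ring] at h
  push_cast at h
  linear_combination (norm := module) -h

end DJKM

theorem stmt10_general (c : ℂ) (P4 P2 : ℤ → ℂ)
    (h44 : P4 (-4) = 1) (h42 : P4 (-2) = 0)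
    (h24 : P2 (-4) = 0) (h22 : P2 (-2) = 1)
    (hrec4 : ∀ k : ℤ, 0 ≤ k →
      ((6 : ℂ) + 2 * (k : ℂ)) * P4 k = 4 * (k : ℂ) * c * P4 (k - 2) - 2 * ((k : ℂ) - 3) * P4 (k - 4))
    (hrec2 : ∀ k : ℤ, 0 ≤ k →
      ((6 : ℂ) + 2 * (k : ℂ)) * P2 k = 4 * (k : ℂ) * c * P2 (k - 2) - 2 * ((k : ℂ) - 3) * P2 (k - 4)) :
    ∀ k : ℤ, 0 ≤ k → Even k → w c k = P4 k • w c (-4) + P2 k • w c (-2) := by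
  have hP := (satisfiesRecurrence_of_two_mul hrec4).smul_add_smul
    (satisfiesRecurrence_of_two_mul hrec2) (w c (-4)) (w c (-2))
  rintro k hk ⟨m, rfl⟩
  have h := (show SatisfiesRecurrence c (w c) from fun k _ => w_recurrence c k).eq_of_eq hP
    (by simp [h44, h24]) (by simp [h42, h22]) (m.toNat + 2)
  rwa [show 2 * ((m.toNat + 2 : ℕ) : ℤ) - 4 = m + m by omega] at h

/-- For even `k ≥ 0`, the class of `t^k u dt` equals `P_{−4,k}·ω₋₄ + P_{−2,k}·ω₋₂`. -/
theorem stmt10 (c : ℂ) (P4 P2 : ℤ → ℂ)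
    (h44 : P4 (-4) = 1) (h43 : P4 (-3) = 0) (h42 : P4 (-2) = 0) (h41 : P4 (-1) = 0)
    (h24 : P2 (-4) = 0) (h23 : P2 (-3) = 0) (h22 : P2 (-2) = 1) (h21 : P2 (-1) = 0)
    (hrec4 : ∀ k : ℤ, 0 ≤ k →
      ((6 : ℂ) + 2 * (k : ℂ)) * P4 k = 4 * (k : ℂ) * c * P4 (k - 2) - 2 * ((k : ℂ) - 3) * P4 (k - 4))
    (hrec2 : ∀ k : ℤ, 0 ≤ k →
      ((6 : ℂ) + 2 * (k : ℂ)) * P2 k = 4 * (k : ℂ) * c * P2 (k - 2) - 2 * ((k : ℂ) - 3) * P2 (k - 4)) :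
    ∀ k : ℤ, 0 ≤ k → Even k → w c k = P4 k • w c (-4) + P2 k • w c (-2) :=
  stmt10_general c P4 P2 h44 h42 h24 h22 hrec4 hrec2
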